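/- There is an absolute constant C with the following property. Suppose A_= is equipped with an (m, β) row paving satisfying βm ≤ C‖A_=‖²log(1+n), where ‖A_=‖ denotes the spectral norm. Then the iterates of Algorithm 1 satisfy, for every j ≥ 1, E[d(x_j, S)²] ≤ γ^j · d(x_0, S)², where γ = 1 − 1/(L²(n_i + C‖A_=‖²log(1+n))). -/

import Mathlib

/-!
Every step of Algorithm 1 moves the iterate `x` to its nearest point in a convex set that
contains the feasible point `y` nearest to `x`, so `‖x - y‖²` drops by at least the squared
length of the move. For a block `τ` the paving bound gives `‖A_τ x - b_τ‖² ≤ β · (move)²`, and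
for an inequality row the move is exactly the positive part of the violation. With the weights
`β / D` per block and `1 / D` per row, `D = n_i + βm`, the expected decrease is therefore at least
`‖e(Ax - b)‖² / D ≥ d(x, S)² / (L² D)` by the Hoffman bound. Iterating this one-step contraction
gives the theorem, already with `C = 1`, since `βm ≤ ‖A_=‖² log(1 + n)` makes `D` no larger than
the stated denominator.
-/

open scoped RealInnerProductSpace BigOperators

noncomputable section

/-- An `(m, β)` row paving of the rows of `a` indexed by `I`: a partition of `I` into `m`
nonempty blocks `T 0, …, T (m-1)` such that for each block `τ`, the row submatrix `A_τ` with
rows `(a i)_{i ∈ τ}` satisfies `λ_max(A_τ A_τ*) ≤ β`, stated equivalently as the quadratic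
bound `‖A_τ x‖² = ∑_{i ∈ τ} ⟪a i, x⟫² ≤ β ‖x‖²` for all `x`. -/
def IsRowPaving {n d : ℕ} (a : Fin n → EuclideanSpace ℝ (Fin d)) (I : Finset (Fin n))
    (m : ℕ) (β : ℝ) (T : Fin m → Finset (Fin n)) : Prop :=
  (∀ k, (T k).Nonempty) ∧
  (∀ k l, k ≠ l → Disjoint (T k) (T l)) ∧
  (Finset.univ.biUnion T = I) ∧
  (∀ k, ∀ x : EuclideanSpace ℝ (Fin d), ∑ i ∈ T k, ⟪a i, x⟫ ^ 2 ≤ β * ‖x‖ ^ 2)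

/-- The random iterates of a Kaczmarz-type algorithm: given the outcomes `ω : Fin j → C` of
`j` independent random choices and an update map `step`, `kacIter step x0 j ω` is the `j`-th
iterate started from `x0`. -/
def kacIter {C V : Type*} (step : C → V → V) (x0 : V) : (j : ℕ) → (Fin j → C) → V
  | 0, _ => x0
  | j + 1, ω => step (ω (Fin.last j)) (kacIter step x0 j fun k => ω k.castSucc)

open Finset

section Iteration

variable {C V : Type*}

lemma kacIter_snoc (step : C → V → V) (x0 : V) (j : ℕ) (σ : Fin j → C) (c : C) :
    kacIter step x0 (j + 1) (Fin.snoc σ c) = step c (kacIter step x0 j σ) := by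
  simp [kacIter]

lemma Fin.sum_pi_succ_eq_sum_sum_snoc {M : Type*} [AddCommMonoid M] [Fintype C] {j : ℕ}
    (g : (Fin (j + 1) → C) → M) :
    ∑ ω, g ω = ∑ σ : Fin j → C, ∑ c, g (Fin.snoc σ c) := by
  rw [← (Fin.snocEquiv fun _ => C).sum_comp, Fintype.sum_prod_type_right]
  rfl

theorem sum_prod_mul_kacIter_le [Fintype C] (step : C → V → V) (w : C → ℝ)
    (hw : ∀ c, 0 ≤ w c) (f : V → ℝ) (hf : ∀ x, 0 ≤ f x) (γ : ℝ)
    (hstep : ∀ x, ∑ c, w c * f (step c x) ≤ γ * f x) (x0 : V) (j : ℕ) :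
    ∑ ω : Fin j → C, (∏ k, w (ω k)) * f (kacIter step x0 j ω) ≤ γ ^ j * f x0 := by
  rcases lt_or_ge γ 0 with hγ | hγ
  -- a negative contraction factor is only possible when `f` vanishes identically
  · have hf0 : ∀ x, f x = 0 := fun x => by
      have := (sum_nonneg fun c _ => mul_nonneg (hw c) (hf (step c x))).trans (hstep x)
      nlinarith [hf x]
    simp [hf0]
  induction j with
  | zero => simp [kacIter]
  | succ j ih =>
    rw [Fin.sum_pi_succ_eq_sum_sum_snoc]
    simp only [kacIter_snoc, Fin.prod_univ_castSucc, Fin.snoc_castSucc, Fin.snoc_last]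
    calc ∑ σ : Fin j → C, ∑ c, (∏ k, w (σ k)) * w c * f (step c (kacIter step x0 j σ))
        = ∑ σ : Fin j → C, (∏ k, w (σ k)) * ∑ c, w c * f (step c (kacIter step x0 j σ)) := by
          simp only [mul_sum, mul_assoc]
      _ ≤ ∑ σ : Fin j → C, (∏ k, w (σ k)) * (γ * f (kacIter step x0 j σ)) := by
          gcongr with σ
          · exact prod_nonneg fun k _ => hw (σ k)
          · exact hstep _
      _ = γ * ∑ σ : Fin j → C, (∏ k, w (σ k)) * f (kacIter step x0 j σ) := by
          rw [mul_sum]; exact sum_congr rfl fun σ _ => by ring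
      _ ≤ γ ^ (j + 1) * f x0 := by
          rw [pow_succ', mul_assoc]; exact mul_le_mul_of_nonneg_left ih hγ

end Iteration

section Geometry

variable {E : Type*} [NormedAddCommGroup E] [InnerProductSpace ℝ E]

theorem Convex.norm_sub_sq_add_norm_sub_sq_le {K : Set E} (hK : Convex ℝ K) {x v y : E}
    (hv : v ∈ K) (hmin : ∀ z ∈ K, ‖x - v‖ ≤ ‖x - z‖) (hy : y ∈ K) :
    ‖x - v‖ ^ 2 + ‖v - y‖ ^ 2 ≤ ‖x - y‖ ^ 2 := by
  have : Nonempty K := ⟨⟨v, hv⟩⟩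
  have hinf : ‖x - v‖ = ⨅ z : K, ‖x - z‖ :=
    le_antisymm (le_ciInf fun z => hmin z z.2)
      (ciInf_le (f := fun z : K => ‖x - z‖) ⟨0, Set.forall_mem_range.2 fun _ => norm_nonneg _⟩
        ⟨v, hv⟩)
  have hobtuse := (norm_eq_iInf_iff_real_inner_le_zero hK hv).1 hinf y hy
  rw [show x - y = (x - v) - (y - v) by abel, norm_sub_sq_real (x - v), norm_sub_rev v y]
  linarith

theorem convex_setOf_forall_inner_eq {ι : Type*} (a : ι → E) (b : ι → ℝ) (τ : Finset ι) :
    Convex ℝ {y : E | ∀ i ∈ τ, ⟪a i, y⟫ = b i} := by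
  simp only [Set.ofPred_forall]
  exact convex_iInter₂ fun i _ => convex_hyperplane (innerₛₗ ℝ (a i)).isLinear (b i)

theorem isClosed_setOf_inner_eq_and_inner_le {ι : Type*} (a : ι → E) (b : ι → ℝ)
    (p q : ι → Prop) :
    IsClosed {x : E | (∀ i, p i → ⟪a i, x⟫ = b i) ∧ (∀ i, q i → ⟪a i, x⟫ ≤ b i)} := by
  simp only [Set.ofPred_and, Set.ofPred_forall]
  exact (isClosed_iInter fun i => isClosed_iInter fun _ =>
      isClosed_eq (by fun_prop) continuous_const).inter
    (isClosed_iInter fun i => isClosed_iInter fun _ => isClosed_le (by fun_prop) continuous_const)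

theorem mul_norm_sub_sq_add_sum_sq_le_of_nearest {ι : Type*} {a : ι → E} {b : ι → ℝ}
    {τ : Finset ι} {β : ℝ} (hβ : 0 ≤ β) (hτ : ∀ z, ∑ i ∈ τ, ⟪a i, z⟫ ^ 2 ≤ β * ‖z‖ ^ 2)
    {x v y : E} (hv : ∀ i ∈ τ, ⟪a i, v⟫ = b i)
    (hmin : ∀ z, (∀ i ∈ τ, ⟪a i, z⟫ = b i) → ‖x - v‖ ≤ ‖x - z‖)
    (hy : ∀ i ∈ τ, ⟪a i, y⟫ = b i) :
    β * ‖v - y‖ ^ 2 + ∑ i ∈ τ, (⟪a i, x⟫ - b i) ^ 2 ≤ β * ‖x - y‖ ^ 2 := by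
  have hpyth := (convex_setOf_forall_inner_eq a b τ).norm_sub_sq_add_norm_sub_sq_le hv hmin hy
  have hres : ∑ i ∈ τ, (⟪a i, x⟫ - b i) ^ 2 = ∑ i ∈ τ, ⟪a i, x - v⟫ ^ 2 :=
    sum_congr rfl fun i hi => by rw [inner_sub_right, hv i hi]
  have := mul_le_mul_of_nonneg_left hpyth hβ
  linarith [hτ (x - v)]

theorem norm_sub_max_smul_sub_sq_add_le {u x y : E} {c : ℝ} (hu : ‖u‖ = 1) (hy : ⟪u, y⟫ ≤ c) :
    ‖x - max (⟪u, x⟫ - c) 0 • u - y‖ ^ 2 + max (⟪u, x⟫ - c) 0 ^ 2 ≤ ‖x - y‖ ^ 2 := by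
  have ht : max (⟪u, x⟫ - c) 0 * max (⟪u, x⟫ - c) 0 ≤ max (⟪u, x⟫ - c) 0 * ⟪u, x - y⟫ := by
    rw [inner_sub_right]
    rcases max_cases (⟪u, x⟫ - c) 0 with ⟨h, h'⟩ | ⟨h, h'⟩ <;> rw [h] <;> nlinarith
  set t := max (⟪u, x⟫ - c) 0
  rw [show x - t • u - y = (x - y) - t • u by abel, norm_sub_sq_real, real_inner_smul_right,
    norm_smul, hu, real_inner_comm, Real.norm_eq_abs, mul_one, sq_abs]
  nlinarith

end Geometry

section Algorithm

variable {ne ni d m : ℕ}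

theorem Fin.card_subtype_le_val :
    Fintype.card {i : Fin (ne + ni) // ne ≤ (i : ℕ)} = ni := by
  have := card_filter_add_card_filter_not (s := univ) fun i : Fin (ne + ni) => (i : ℕ) < ne
  simp only [Fin.card_filter_val_lt, not_lt, card_univ, Fintype.card_fin] at this
  rw [Fintype.card_subtype]
  omega

theorem sum_residual_sq_eq_of_partition {T : Fin m → Finset (Fin (ne + ni))}
    (hdisj : ∀ k l, k ≠ l → Disjoint (T k) (T l))
    (hunion : univ.biUnion T = univ.filter fun i : Fin (ne + ni) => (i : ℕ) < ne)
    (r : Fin (ne + ni) → ℝ) :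
    ∑ i : Fin (ne + ni), (if (i : ℕ) < ne then r i else max (r i) 0) ^ 2 =
      ∑ k, ∑ i ∈ T k, r i ^ 2 + ∑ i : {i : Fin (ne + ni) // ne ≤ (i : ℕ)}, max (r i.1) 0 ^ 2 := by
  rw [sum_congr rfl fun i _ => apply_ite (· ^ 2) _ _ _, sum_ite, ← hunion,
    sum_biUnion fun k _ l _ => hdisj k l]
  congr 1
  exact sum_subtype _ (by simp) (fun i => max (r i) 0 ^ 2)

/-- `‖e(Ax - b)‖²` -/
def residualSq (a : Fin (ne + ni) → EuclideanSpace ℝ (Fin d)) (b : Fin (ne + ni) → ℝ)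
    (x : EuclideanSpace ℝ (Fin d)) : ℝ :=
  ∑ i : Fin (ne + ni), (if (i : ℕ) < ne then ⟪a i, x⟫ - b i else max (⟪a i, x⟫ - b i) 0) ^ 2

variable {a : Fin (ne + ni) → EuclideanSpace ℝ (Fin d)} {b : Fin (ne + ni) → ℝ} {β : ℝ}
  {T : Fin m → Finset (Fin (ne + ni))}
  {step : Fin m ⊕ {i : Fin (ne + ni) // ne ≤ (i : ℕ)} →
    EuclideanSpace ℝ (Fin d) → EuclideanSpace ℝ (Fin d)}
  {w : Fin m ⊕ {i : Fin (ne + ni) // ne ≤ (i : ℕ)} → ℝ}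

theorem sum_weight_mul_norm_step_sub_sq_le (ha : ∀ i, ‖a i‖ = 1) (hβ : 0 < β) (hni : 0 < ni)
    (hT : IsRowPaving a (univ.filter fun i : Fin (ne + ni) => (i : ℕ) < ne) m β T)
    (hproj : ∀ k x, (∀ i ∈ T k, ⟪a i, step (.inl k) x⟫ = b i) ∧
      ∀ y, (∀ i ∈ T k, ⟪a i, y⟫ = b i) → ‖x - step (.inl k) x‖ ≤ ‖x - y‖)
    (hrow : ∀ i x, step (.inr i) x = x - max (⟪a i.1, x⟫ - b i.1) 0 • a i.1)
    (hwl : ∀ k, w (.inl k) = β / (ni + β * m)) (hwr : ∀ i, w (.inr i) = 1 / (ni + β * m))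
    (x : EuclideanSpace ℝ (Fin d)) {y : EuclideanSpace ℝ (Fin d)}
    (hyeq : ∀ i : Fin (ne + ni), (i : ℕ) < ne → ⟪a i, y⟫ = b i)
    (hyle : ∀ i : Fin (ne + ni), ne ≤ (i : ℕ) → ⟪a i, y⟫ ≤ b i) :
    ∑ c, w c * ‖step c x - y‖ ^ 2 ≤ ‖x - y‖ ^ 2 - residualSq a b x / (ni + β * m) := by
  obtain ⟨-, hdisj, hunion, hpave⟩ := hT
  have hD : (0 : ℝ) < ni + β * m := by positivity
  have hyT : ∀ k, ∀ i ∈ T k, ⟪a i, y⟫ = b i := fun k i hi => hyeq i <| by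
    have hi' := mem_biUnion.2 ⟨k, mem_univ k, hi⟩
    rw [hunion, mem_filter] at hi'
    exact hi'.2
  have hblock k := mul_norm_sub_sq_add_sum_sq_le_of_nearest hβ.le (hpave k)
    (hproj k x).1 (hproj k x).2 (hyT k)
  have hineq (i : {i : Fin (ne + ni) // ne ≤ (i : ℕ)}) :=
    hrow i x ▸ norm_sub_max_smul_sub_sq_add_le (x := x) (ha i.1) (hyle i.1 i.2)
  calc ∑ c, w c * ‖step c x - y‖ ^ 2
      = (∑ k, β * ‖step (.inl k) x - y‖ ^ 2 + ∑ i, ‖step (.inr i) x - y‖ ^ 2) /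
          (ni + β * m) := by
        simp only [Fintype.sum_sum_type, hwl, hwr, add_div, sum_div]
        congr 1 <;> exact sum_congr rfl fun _ _ => by ring
    _ ≤ (∑ k, (β * ‖x - y‖ ^ 2 - ∑ i ∈ T k, (⟪a i, x⟫ - b i) ^ 2) +
          ∑ i : {i : Fin (ne + ni) // ne ≤ (i : ℕ)},
            (‖x - y‖ ^ 2 - max (⟪a i.1, x⟫ - b i.1) 0 ^ 2)) / (ni + β * m) := by
        gcongr with k _ i _
        · linarith [hblock k]
        · linarith [hineq i]
    _ = ‖x - y‖ ^ 2 - residualSq a b x / (ni + β * m) := by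
        rw [residualSq, sum_residual_sq_eq_of_partition hdisj hunion, sum_sub_distrib,
          sum_sub_distrib, sum_const, sum_const, card_univ, card_univ, Fintype.card_fin,
          Fin.card_subtype_le_val, nsmul_eq_mul, nsmul_eq_mul]
        field_simp
        ring

theorem sum_weight_mul_infDist_step_sq_le (ha : ∀ i, ‖a i‖ = 1) (hβ : 0 < β) (hni : 0 < ni)
    (hT : IsRowPaving a (univ.filter fun i : Fin (ne + ni) => (i : ℕ) < ne) m β T)
    (hproj : ∀ k x, (∀ i ∈ T k, ⟪a i, step (.inl k) x⟫ = b i) ∧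
      ∀ y, (∀ i ∈ T k, ⟪a i, y⟫ = b i) → ‖x - step (.inl k) x‖ ≤ ‖x - y‖)
    (hrow : ∀ i x, step (.inr i) x = x - max (⟪a i.1, x⟫ - b i.1) 0 • a i.1)
    (hwl : ∀ k, w (.inl k) = β / (ni + β * m)) (hwr : ∀ i, w (.inr i) = 1 / (ni + β * m))
    {S : Set (EuclideanSpace ℝ (Fin d))} (hSc : IsClosed S) (hSne : S.Nonempty)
    (hSsub : ∀ y ∈ S, (∀ i : Fin (ne + ni), (i : ℕ) < ne → ⟪a i, y⟫ = b i) ∧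
      (∀ i : Fin (ne + ni), ne ≤ (i : ℕ) → ⟪a i, y⟫ ≤ b i))
    {L : ℝ} (hL : 0 < L)
    (hHoff : ∀ x, Metric.infDist x S ≤ L * Real.sqrt (residualSq a b x))
    (x : EuclideanSpace ℝ (Fin d)) :
    ∑ c, w c * Metric.infDist (step c x) S ^ 2 ≤
      (1 - 1 / (L ^ 2 * (ni + β * m))) * Metric.infDist x S ^ 2 := by
  have hD : (0 : ℝ) < ni + β * m := by positivity
  have hw c : 0 ≤ w c := by cases c <;> simp only [hwl, hwr] <;> positivity
  obtain ⟨y, hyS, hxy⟩ := hSc.exists_infDist_eq_dist hSne x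
  rw [dist_eq_norm] at hxy
  have hHoff_sq : ‖x - y‖ ^ 2 ≤ L ^ 2 * residualSq a b x := by
    have hR : 0 ≤ residualSq a b x := sum_nonneg fun _ _ => sq_nonneg _
    calc ‖x - y‖ ^ 2 ≤ (L * Real.sqrt (residualSq a b x)) ^ 2 := by
          rw [← hxy]; gcongr; exacts [Metric.infDist_nonneg, hHoff x]
      _ = L ^ 2 * residualSq a b x := by rw [mul_pow, Real.sq_sqrt hR]
  calc ∑ c, w c * Metric.infDist (step c x) S ^ 2 ≤ ∑ c, w c * ‖step c x - y‖ ^ 2 := by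
        gcongr with c
        · exact hw c
        · exact Metric.infDist_nonneg
        · exact dist_eq_norm (step c x) y ▸ Metric.infDist_le_dist_of_mem hyS
    _ ≤ ‖x - y‖ ^ 2 - residualSq a b x / (ni + β * m) :=
        sum_weight_mul_norm_step_sub_sq_le ha hβ hni hT hproj hrow hwl hwr x
          (hSsub y hyS).1 (hSsub y hyS).2
    _ ≤ (1 - 1 / (L ^ 2 * (ni + β * m))) * Metric.infDist x S ^ 2 := by
        rw [hxy, sub_mul, one_mul, one_div, ← div_eq_inv_mul, ← div_div]
        gcongr
        rwa [div_le_iff₀ (by positivity), mul_comm]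

end Algorithm

/-- **Corollary.** There is an absolute constant `C > 0` such that: for every standardized
system of equalities and inequalities with nonempty feasible set `S`, Hoffman constant `L`,
and an `(m, β)` row paving of `A_=` satisfying `βm ≤ C ‖A_=‖² log(1+n)` (where `‖A_=‖` is the
spectral norm of the equality submatrix, characterized here by `NAsq = ‖A_=‖²` being the least
`t ≥ 0` with `∑_{i ∈ I_=} ⟪a i, x⟫² ≤ t ‖x‖²` for all `x`), the iterates of Algorithm 1
satisfy `𝔼[d(x_j, S)²] ≤ γ^j ⬝ d(x_0, S)²` with
`γ = 1 − 1/(L²(n_i + C ‖A_=‖² log(1+n)))`. -/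
theorem block_kaczmarz_with_inequalities_convergence_paving :
    ∃ C : ℝ, 0 < C ∧
    ∀ (ne ni d m : ℕ), 0 < ni → 0 < m →
    ∀ (a : Fin (ne + ni) → EuclideanSpace ℝ (Fin d)) (b : Fin (ne + ni) → ℝ),
    (∀ i, ‖a i‖ = 1) →
    ∀ S : Set (EuclideanSpace ℝ (Fin d)),
    S = {x | (∀ i : Fin (ne + ni), (i : ℕ) < ne → ⟪a i, x⟫ = b i) ∧
             (∀ i : Fin (ne + ni), ne ≤ (i : ℕ) → ⟪a i, x⟫ ≤ b i)} →
    S.Nonempty →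
    ∀ β : ℝ, 0 < β →
    ∀ T : Fin m → Finset (Fin (ne + ni)),
    IsRowPaving a (Finset.univ.filter fun i : Fin (ne + ni) => (i : ℕ) < ne) m β T →
    -- `NAsq` is the squared spectral norm `‖A_=‖²` of the equality submatrix
    ∀ NAsq : ℝ,
    IsLeast {t : ℝ | 0 ≤ t ∧ ∀ x : EuclideanSpace ℝ (Fin d),
      ∑ i ∈ (Finset.univ.filter fun i : Fin (ne + ni) => (i : ℕ) < ne), ⟪a i, x⟫ ^ 2
        ≤ t * ‖x‖ ^ 2} NAsq →
    -- the paving satisfies `βm ≤ C ‖A_=‖² log(1+n)` as provided by Proposition 1.6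
    β * m ≤ C * NAsq * Real.log (1 + (ne + ni)) →
    ∀ L : ℝ, 0 < L →
    (∀ x : EuclideanSpace ℝ (Fin d), Metric.infDist x S ≤
      L * Real.sqrt (∑ i : Fin (ne + ni), (if (i : ℕ) < ne then ⟪a i, x⟫ - b i
                           else max (⟪a i, x⟫ - b i) 0) ^ 2)) →
    ∀ step : (Fin m ⊕ {i : Fin (ne + ni) // ne ≤ (i : ℕ)}) →
      EuclideanSpace ℝ (Fin d) → EuclideanSpace ℝ (Fin d),
    (∀ (k : Fin m) (x : EuclideanSpace ℝ (Fin d)),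
      (∀ i ∈ T k, ⟪a i, step (Sum.inl k) x⟫ = b i) ∧
      (∀ y : EuclideanSpace ℝ (Fin d), (∀ i ∈ T k, ⟪a i, y⟫ = b i) →
        ‖x - step (Sum.inl k) x‖ ≤ ‖x - y‖)) →
    (∀ (i : {i : Fin (ne + ni) // ne ≤ (i : ℕ)}) (x : EuclideanSpace ℝ (Fin d)),
      step (Sum.inr i) x = x - max (⟪a i.1, x⟫ - b i.1) 0 • a i.1) →
    ∀ w : (Fin m ⊕ {i : Fin (ne + ni) // ne ≤ (i : ℕ)}) → ℝ,
    (∀ k : Fin m, w (Sum.inl k) = (β * m / (ni + β * m)) / m) →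
    (∀ i : {i : Fin (ne + ni) // ne ≤ (i : ℕ)},
      w (Sum.inr i) = (1 - β * m / (ni + β * m)) / ni) →
    ∀ x0 : EuclideanSpace ℝ (Fin d), ∀ j : ℕ, 1 ≤ j →
    ∑ ω : Fin j → (Fin m ⊕ {i : Fin (ne + ni) // ne ≤ (i : ℕ)}),
        (∏ k, w (ω k)) * Metric.infDist (kacIter step x0 j ω) S ^ 2 ≤
      (1 - 1 / (L ^ 2 * (ni + C * NAsq * Real.log (1 + (ne + ni))))) ^ j *
        Metric.infDist x0 S ^ 2 := by
  refine ⟨1, one_pos, ?_⟩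
  intro ne ni d m hni hm a b ha S hS hSne β hβ T hT NAsq _ hpav L hL hHoff step hproj hrow
    w hwl hwr x0 j _
  have hD : (0 : ℝ) < ni + β * m := by positivity
  have hwl' k : w (.inl k) = β / (ni + β * m) := by rw [hwl k]; field_simp
  have hwr' i : w (.inr i) = 1 / (ni + β * m) := by rw [hwr i]; field_simp; ring
  have hw c : 0 ≤ w c := by cases c <;> simp only [hwl', hwr'] <;> positivity
  have hDle : (ni : ℝ) + β * m ≤ ni + 1 * NAsq * Real.log (1 + (ne + ni)) := by linarith
  have hSc : IsClosed S := hS ▸ isClosed_setOf_inner_eq_and_inner_le a b _ _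
  refine sum_prod_mul_kacIter_le step w hw (fun x => Metric.infDist x S ^ 2)
    (fun _ => sq_nonneg _) _ (fun x => ?_) x0 j
  calc _ ≤ (1 - 1 / (L ^ 2 * (ni + β * m))) * Metric.infDist x S ^ 2 :=
        sum_weight_mul_infDist_step_sq_le ha hβ hni hT hproj hrow hwl' hwr' hSc hSne
          (fun _ hy => by rwa [hS] at hy) hL hHoff x
    _ ≤ _ := by gcongr
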